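/- Suppose Ψ is smooth and nowhere zero, satisfying Ψ_xx = QΨ and Ψ_t = -UΨ_x + (1/2)U_x Ψ. Then p = Ψ_x/Ψ satisfies the local conservation law p_t = ((1/2)U_x - pU)_x. -/

import Mathlib

/-- Partial derivative in the first (space) variable. -/
noncomputable def Dx (f : ℝ → ℝ → ℝ) (x t : ℝ) : ℝ := deriv (fun y => f y t) x

/-- Partial derivative in the second (time) variable. -/
noncomputable def Dt (f : ℝ → ℝ → ℝ) (x t : ℝ) : ℝ := deriv (fun s => f x s) t

lemma Dx_eq_fderiv (f : ℝ → ℝ → ℝ) (hf : ContDiff ℝ (⊤ : ℕ∞) (fun q : ℝ × ℝ => f q.1 q.2))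
    (x t : ℝ) : Dx f x t = fderiv ℝ (fun q : ℝ × ℝ => f q.1 q.2) (x, t) (1, 0) := by
  have hF := (hf.differentiable (by simp) (x, t)).hasFDerivAt
  have hline : HasDerivAt (fun y : ℝ => (y, t)) ((1 : ℝ), (0 : ℝ)) x :=
    (hasDerivAt_id x).prodMk (hasDerivAt_const x t)
  exact (hF.comp_hasDerivAt x hline).deriv

lemma Dt_eq_fderiv (f : ℝ → ℝ → ℝ) (hf : ContDiff ℝ (⊤ : ℕ∞) (fun q : ℝ × ℝ => f q.1 q.2))
    (x t : ℝ) : Dt f x t = fderiv ℝ (fun q : ℝ × ℝ => f q.1 q.2) (x, t) (0, 1) := by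
  have hF := (hf.differentiable (by simp) (x, t)).hasFDerivAt
  have hline : HasDerivAt (fun s : ℝ => (x, s)) ((0 : ℝ), (1 : ℝ)) t :=
    (hasDerivAt_const t x).prodMk (hasDerivAt_id t)
  exact (hF.comp_hasDerivAt t hline).deriv

lemma hasDerivAt_x (f : ℝ → ℝ → ℝ) (hf : ContDiff ℝ (⊤ : ℕ∞) (fun q : ℝ × ℝ => f q.1 q.2))
    (x t : ℝ) : HasDerivAt (fun y => f y t) (Dx f x t) x := by
  have h : ContDiff ℝ (⊤ : ℕ∞) (fun y : ℝ => f y t) :=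
    hf.comp (contDiff_id.prodMk contDiff_const)
  exact (h.differentiable (by simp) x).hasDerivAt

lemma hasDerivAt_t (f : ℝ → ℝ → ℝ) (hf : ContDiff ℝ (⊤ : ℕ∞) (fun q : ℝ × ℝ => f q.1 q.2))
    (x t : ℝ) : HasDerivAt (fun s => f x s) (Dt f x t) t := by
  have h : ContDiff ℝ (⊤ : ℕ∞) (fun s : ℝ => f x s) :=
    hf.comp (contDiff_const.prodMk contDiff_id)
  exact (h.differentiable (by simp) t).hasDerivAt

lemma contDiff_Dx (f : ℝ → ℝ → ℝ) (hf : ContDiff ℝ (⊤ : ℕ∞) (fun q : ℝ × ℝ => f q.1 q.2)) :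
    ContDiff ℝ (⊤ : ℕ∞) (fun q : ℝ × ℝ => Dx f q.1 q.2) := by
  have h : (fun q : ℝ × ℝ => Dx f q.1 q.2)
      = fun q : ℝ × ℝ => fderiv ℝ (fun q : ℝ × ℝ => f q.1 q.2) q (1, 0) := by
    funext q; exact Dx_eq_fderiv f hf q.1 q.2
  rw [h]
  exact (hf.fderiv_right (by simp)).clm_apply contDiff_const

lemma contDiff_Dt (f : ℝ → ℝ → ℝ) (hf : ContDiff ℝ (⊤ : ℕ∞) (fun q : ℝ × ℝ => f q.1 q.2)) :
    ContDiff ℝ (⊤ : ℕ∞) (fun q : ℝ × ℝ => Dt f q.1 q.2) := by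
  have h : (fun q : ℝ × ℝ => Dt f q.1 q.2)
      = fun q : ℝ × ℝ => fderiv ℝ (fun q : ℝ × ℝ => f q.1 q.2) q (0, 1) := by
    funext q; exact Dt_eq_fderiv f hf q.1 q.2
  rw [h]
  exact (hf.fderiv_right (by simp)).clm_apply contDiff_const

lemma clairaut (f : ℝ → ℝ → ℝ) (hf : ContDiff ℝ (⊤ : ℕ∞) (fun q : ℝ × ℝ => f q.1 q.2))
    (x t : ℝ) : Dt (Dx f) x t = Dx (Dt f) x t := by
  set F : ℝ × ℝ → ℝ := fun q => f q.1 q.2 with hF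
  set F' : ℝ × ℝ → (ℝ × ℝ) →L[ℝ] ℝ := fderiv ℝ F with hF'
  have hF'c : ContDiff ℝ (⊤ : ℕ∞) F' := hf.fderiv_right (by simp)
  have hF'd : HasFDerivAt F' (fderiv ℝ F' (x, t)) (x, t) :=
    (hF'c.differentiable (by simp) (x, t)).hasFDerivAt
  have hFd : ∀ y, HasFDerivAt F (F' y) y := fun y =>
    (hf.differentiable (by simp) y).hasFDerivAt
  have symm := second_derivative_symmetric hFd hF'd (1, 0) (0, 1)
  -- evaluation maps
  have e10 : ∀ v : ℝ × ℝ,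
      fderiv ℝ (fun q : ℝ × ℝ => F' q (1, 0)) (x, t) v = fderiv ℝ F' (x, t) v (1, 0) := by
    intro v
    have := ((ContinuousLinearMap.apply ℝ ℝ ((1 : ℝ), (0 : ℝ))).hasFDerivAt.comp (x, t) hF'd).fderiv
    rw [show (fun q : ℝ × ℝ => F' q (1, 0)) =
      (ContinuousLinearMap.apply ℝ ℝ ((1 : ℝ), (0 : ℝ))) ∘ F' from rfl, this]
    rfl
  have e01 : ∀ v : ℝ × ℝ,
      fderiv ℝ (fun q : ℝ × ℝ => F' q (0, 1)) (x, t) v = fderiv ℝ F' (x, t) v (0, 1) := by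
    intro v
    have := ((ContinuousLinearMap.apply ℝ ℝ ((0 : ℝ), (1 : ℝ))).hasFDerivAt.comp (x, t) hF'd).fderiv
    rw [show (fun q : ℝ × ℝ => F' q (0, 1)) =
      (ContinuousLinearMap.apply ℝ ℝ ((0 : ℝ), (1 : ℝ))) ∘ F' from rfl, this]
    rfl
  have hDx : (fun q : ℝ × ℝ => Dx f q.1 q.2) = fun q : ℝ × ℝ => F' q (1, 0) := by
    funext q; exact Dx_eq_fderiv f hf q.1 q.2
  have hDt : (fun q : ℝ × ℝ => Dt f q.1 q.2) = fun q : ℝ × ℝ => F' q (0, 1) := by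
    funext q; exact Dt_eq_fderiv f hf q.1 q.2
  have h1 : Dt (Dx f) x t = fderiv ℝ (fun q : ℝ × ℝ => F' q (1, 0)) (x, t) (0, 1) := by
    rw [← hDx]
    exact Dt_eq_fderiv (Dx f) (hDx ▸ contDiff_Dx f hf) x t
  have h2 : Dx (Dt f) x t = fderiv ℝ (fun q : ℝ × ℝ => F' q (0, 1)) (x, t) (1, 0) := by
    rw [← hDt]
    exact Dx_eq_fderiv (Dt f) (hDt ▸ contDiff_Dt f hf) x t
  rw [h1, h2, e10, e01]
  exact symm.symm

/-- If `Ψ` is smooth, nowhere zero, and solves the Lax pair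
`Ψ_xx = Q Ψ`, `Ψ_t = -U Ψ_x + (1/2) U_x Ψ`, then `p = Ψ_x / Ψ`
satisfies the local conservation law `p_t = ((1/2) U_x - p U)_x`. -/
theorem conservation_law_from_lax (Ψ Q U : ℝ → ℝ → ℝ)
    (hΨ : ContDiff ℝ (⊤ : ℕ∞) (fun q : ℝ × ℝ => Ψ q.1 q.2))
    (hQ : ContDiff ℝ (⊤ : ℕ∞) (fun q : ℝ × ℝ => Q q.1 q.2))
    (hU : ContDiff ℝ (⊤ : ℕ∞) (fun q : ℝ × ℝ => U q.1 q.2))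
    (hne : ∀ x t, Ψ x t ≠ 0)
    (hxx : ∀ x t, Dx (Dx Ψ) x t = Q x t * Ψ x t)
    (ht : ∀ x t, Dt Ψ x t =
      -U x t * Dx Ψ x t + (1 / 2) * Dx U x t * Ψ x t)
    (p : ℝ → ℝ → ℝ) (hp : ∀ x t, p x t = Dx Ψ x t / Ψ x t) :
    ∀ x t, Dt p x t =
      Dx (fun y s => (1 / 2) * Dx U y s - p y s * U y s) x t := by
  intro x t
  have hDxΨ := contDiff_Dx Ψ hΨ
  have hDxU := contDiff_Dx U hU
  -- LHS
  have hLHS : Dt p x t =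
      (Dt (Dx Ψ) x t * Ψ x t - Dx Ψ x t * Dt Ψ x t) / Ψ x t ^ 2 := by
    have hfun : (fun s => p x s) = fun s => Dx Ψ x s / Ψ x s := funext fun s => hp x s
    have hL : HasDerivAt (fun s => Dx Ψ x s / Ψ x s)
        ((Dt (Dx Ψ) x t * Ψ x t - Dx Ψ x t * Dt Ψ x t) / Ψ x t ^ 2) t :=
      (hasDerivAt_t (Dx Ψ) hDxΨ x t).div (hasDerivAt_t Ψ hΨ x t) (hne x t)
    rw [Dt, hfun]
    exact hL.deriv
  -- derivative of p in x
  have hpx : HasDerivAt (fun y => p y t)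
      ((Dx (Dx Ψ) x t * Ψ x t - Dx Ψ x t * Dx Ψ x t) / Ψ x t ^ 2) x := by
    have hfun : (fun y => p y t) = fun y => Dx Ψ y t / Ψ y t := funext fun y => hp y t
    rw [hfun]
    exact (hasDerivAt_x (Dx Ψ) hDxΨ x t).div (hasDerivAt_x Ψ hΨ x t) (hne x t)
  -- RHS
  have hRHS : Dx (fun y s => (1 / 2 : ℝ) * Dx U y s - p y s * U y s) x t =
      (1 / 2) * Dx (Dx U) x t -
        (((Dx (Dx Ψ) x t * Ψ x t - Dx Ψ x t * Dx Ψ x t) / Ψ x t ^ 2) * U x t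
          + p x t * Dx U x t) := by
    have hR : HasDerivAt (fun y => (1 / 2 : ℝ) * Dx U y t - p y t * U y t)
        ((1 / 2) * Dx (Dx U) x t -
          (((Dx (Dx Ψ) x t * Ψ x t - Dx Ψ x t * Dx Ψ x t) / Ψ x t ^ 2) * U x t
            + p x t * Dx U x t)) x :=
      ((hasDerivAt_x (Dx U) hDxU x t).const_mul (1 / 2 : ℝ)).sub
        (hpx.mul (hasDerivAt_x U hU x t))
    rw [Dx]
    exact hR.deriv
  -- Clairaut and the t-equation differentiated in x
  have hcl := clairaut Ψ hΨ x t
  have hDxDtΨ : Dx (Dt Ψ) x t =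
      (-Dx U x t * Dx Ψ x t + -U x t * Dx (Dx Ψ) x t)
        + ((1 / 2) * Dx (Dx U) x t * Ψ x t + (1 / 2) * Dx U x t * Dx Ψ x t) := by
    have hfun : (fun y => Dt Ψ y t)
        = fun y => -U y t * Dx Ψ y t + (1 / 2) * Dx U y t * Ψ y t :=
      funext fun y => ht y t
    have hg : HasDerivAt (fun y => -U y t * Dx Ψ y t + (1 / 2) * Dx U y t * Ψ y t)
        ((-Dx U x t * Dx Ψ x t + -U x t * Dx (Dx Ψ) x t)
          + ((1 / 2) * Dx (Dx U) x t * Ψ x t + (1 / 2) * Dx U x t * Dx Ψ x t)) x :=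
      (((hasDerivAt_x U hU x t).neg.mul (hasDerivAt_x (Dx Ψ) hDxΨ x t)).add
        (((hasDerivAt_x (Dx U) hDxU x t).const_mul (1 / 2 : ℝ)).mul
          (hasDerivAt_x Ψ hΨ x t)))
    rw [Dx, hfun]
    exact hg.deriv
  rw [hLHS, hRHS, hcl, hDxDtΨ, hxx x t, ht x t, hp x t]
  field_simp [hne x t]
  ring
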